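/- For every integer m, the function x ↦ I_m(x) K_m(x) is strictly decreasing on (0, ∞). -/

import Mathlib

open MeasureTheory Real Filter Asymptotics Topology

/-- Modified Bessel function of the first kind of integer order `m`. -/
noncomputable def besselI (m : ℤ) (x : ℝ) : ℝ :=
  (1 / Real.pi) * ∫ θ in (0:ℝ)..Real.pi, Real.exp (x * Real.cos θ) * Real.cos ((m : ℝ) * θ)

/-- Modified Bessel function of the second kind of integer order `m`. -/
noncomputable def besselK (m : ℤ) (x : ℝ) : ℝ :=
  ∫ t in Set.Ioi (0:ℝ), Real.exp (-x * Real.cosh t) * Real.cosh ((m : ℝ) * t)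

/-- `ξ_{m,α,d}(κ) = α R_d I_m(κ R_d) K_m(κ R_d) − 1` with `R_d = R + d`. -/
noncomputable def xiA (m : ℤ) (α R d κ : ℝ) : ℝ :=
  α * (R + d) * (besselI m (κ * (R + d)) * besselK m (κ * (R + d))) - 1

/-- `ξ_{m,β}(κ) = β R I_m(κ R) K_m(κ R) − 1`. -/
noncomputable def xiB (m : ℤ) (β R κ : ℝ) : ℝ :=
  β * R * (besselI m (κ * R) * besselK m (κ * R)) - 1

/-- `ν_m(κ, d) = α β R_d R K_m(κ R_d)² I_m(κ R)²` with `R_d = R + d`. -/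
noncomputable def nu (m : ℤ) (α β R κ d : ℝ) : ℝ :=
  α * β * (R + d) * R * (besselK m (κ * (R + d)))^2 * (besselI m (κ * R))^2

/-- `η_m(κ, d) = ν_m(κ, d) − ξ_{m,α,d}(κ) ξ_{m,β}(κ)`. -/
noncomputable def eta (m : ℤ) (α β R κ d : ℝ) : ℝ :=
  nu m α β R κ d - xiA m α R d κ * xiB m β R κ

/-!
Both `I_m` and `K_m` solve the modified Bessel equation `x² y'' + x y' = (x² + m²) y`: differentiate
under the integral sign and integrate by parts once. For any solution,
`E(x) = x² y'(x)² - (x² + m²) y(x)²` has derivative `-2 x y(x)²`, so `E` is strictly decreasing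
wherever `y ≠ 0`. As `E_I(0) = 0` and `E_K(x) → 0` when `x → ∞` (`K_m` decays exponentially), this
gives `x |I_m'| < √(x² + m²) I_m` and `x |K_m'| > √(x² + m²) K_m`, hence `(I_m K_m)' < 0`.
Positivity of `I_m` comes from its Taylor series `π I_m(x) = ∑ xⁿ/n! ∫₀^π cosⁿθ cos mθ dθ`, whose
coefficients are nonnegative by `2 cos θ cos mθ = cos (m-1)θ + cos (m+1)θ`.
-/

open Set
open scoped Nat

namespace Real

theorem one_add_sq_div_two_le_cosh (t : ℝ) : 1 + t ^ 2 / 2 ≤ cosh t := by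
  have := sum_le_hasSum (Finset.range 2)
    (fun n _ => div_nonneg ((even_two_mul n).pow_nonneg t) (Nat.cast_nonneg _)) (hasSum_cosh t)
  simpa [Finset.sum_range_succ] using this

theorem cosh_le_exp_abs (t : ℝ) : cosh t ≤ exp |t| := by
  rw [← cosh_abs, cosh_eq]
  linarith [exp_le_exp.2 (neg_le_self (abs_nonneg t))]

theorem abs_sinh_le_cosh (t : ℝ) : |sinh t| ≤ cosh t := by
  rw [abs_sinh, ← cosh_abs]
  exact (sinh_lt_cosh _).le

end Real

def besselEnergy (ν : ℝ) (y y' : ℝ → ℝ) (x : ℝ) : ℝ :=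
  x ^ 2 * y' x ^ 2 - (x ^ 2 + ν ^ 2) * y x ^ 2

section Energy

variable {ν : ℝ} {y y' y'' : ℝ → ℝ}

theorem hasDerivAt_besselEnergy {x : ℝ} (hy : HasDerivAt y (y' x) x)
    (hy' : HasDerivAt y' (y'' x) x) (hode : x ^ 2 * y'' x + x * y' x = (x ^ 2 + ν ^ 2) * y x) :
    HasDerivAt (besselEnergy ν y y') (-2 * x * y x ^ 2) x := by
  have := ((hasDerivAt_pow 2 x).mul (hy'.pow 2)).sub
    (((hasDerivAt_pow 2 x).add_const (ν ^ 2)).mul (hy.pow 2))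
  refine this.congr_deriv ?_
  push_cast [Pi.pow_apply]
  linear_combination 2 * y' x * hode

theorem strictAntiOn_besselEnergy {D : Set ℝ} (hD : Convex ℝ D) (hD₀ : interior D ⊆ Ioi 0)
    (hcont : ContinuousOn (besselEnergy ν y y') D)
    (hy : ∀ x ∈ interior D, HasDerivAt y (y' x) x)
    (hy' : ∀ x ∈ interior D, HasDerivAt y' (y'' x) x)
    (hode : ∀ x ∈ interior D, x ^ 2 * y'' x + x * y' x = (x ^ 2 + ν ^ 2) * y x)
    (hne : ∀ x ∈ interior D, y x ≠ 0) :
    StrictAntiOn (besselEnergy ν y y') D := by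
  refine strictAntiOn_of_hasDerivWithinAt_neg hD hcont
    (fun x hx => (hasDerivAt_besselEnergy (hy x hx) (hy' x hx) (hode x hx)).hasDerivWithinAt)
    fun x hx => ?_
  linarith [mul_pos (mem_Ioi.1 (hD₀ hx)) (sq_pos_of_ne_zero (hne x hx))]

end Energy

noncomputable def besselKMoment (ν : ℝ) (k : ℕ) (x : ℝ) : ℝ :=
  ∫ t in Ioi 0, cosh t ^ k * (exp (-x * cosh t) * cosh (ν * t))

section BesselK

variable (ν : ℝ)

theorem cosh_pow_mul_exp_mul_cosh_le (k : ℕ) {x t : ℝ} (hx : 0 < x) (ht : 0 ≤ t) :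
    cosh t ^ k * (exp (-x * cosh t) * cosh (ν * t)) ≤
      exp ((k + |ν| + 1) ^ 2 / (2 * x) - x) * exp (-t) := by
  have hcosh : cosh t ^ k ≤ exp (k * t) := by
    rw [exp_nat_mul]
    gcongr
    simpa [abs_of_nonneg ht] using cosh_le_exp_abs t
  have hcoshν : cosh (ν * t) ≤ exp (|ν| * t) := by
    simpa [abs_mul, abs_of_nonneg ht] using cosh_le_exp_abs (ν * t)
  have hsq : (k + |ν| + 1) * t ≤ x * t ^ 2 / 2 + (k + |ν| + 1) ^ 2 / (2 * x) := by
    rw [div_add_div _ _ two_ne_zero (by positivity), le_div_iff₀ (by positivity)]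
    nlinarith [sq_nonneg (x * t - (k + |ν| + 1))]
  have hlow := mul_le_mul_of_nonneg_left (one_add_sq_div_two_le_cosh t) hx.le
  calc cosh t ^ k * (exp (-x * cosh t) * cosh (ν * t))
      ≤ exp (k * t) * (exp (-x * cosh t) * exp (|ν| * t)) := by gcongr
    _ = exp (k * t + -x * cosh t + |ν| * t) := by rw [exp_add, exp_add]; ring
    _ ≤ exp ((k + |ν| + 1) ^ 2 / (2 * x) - x + -t) := exp_le_exp.2 (by nlinarith)
    _ = _ := exp_add _ _

theorem integrableOn_cosh_pow_mul_exp_mul_cosh (k : ℕ) {x : ℝ} (hx : 0 < x) :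
    IntegrableOn (fun t => cosh t ^ k * (exp (-x * cosh t) * cosh (ν * t))) (Ioi 0) := by
  refine Integrable.mono' ((exp_neg_integrableOn_Ioi 0 one_pos).const_mul
    (exp ((k + |ν| + 1) ^ 2 / (2 * x) - x))) (by fun_prop) ?_
  refine (ae_restrict_iff' measurableSet_Ioi).2 (ae_of_all _ fun t ht => ?_)
  rw [norm_of_nonneg (by positivity), neg_one_mul]
  exact cosh_pow_mul_exp_mul_cosh_le ν k hx (le_of_lt ht)

theorem besselKMoment_pos (k : ℕ) {x : ℝ} (hx : 0 < x) : 0 < besselKMoment ν k x := by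
  refine (setIntegral_pos_iff_support_of_nonneg_ae (ae_of_all _ fun t => by positivity)
    (integrableOn_cosh_pow_mul_exp_mul_cosh ν k hx)).2 ?_
  rw [Function.support_eq_univ fun t => by positivity, univ_inter, Real.volume_Ioi]
  exact ENNReal.zero_lt_top

theorem hasDerivAt_besselKMoment (k : ℕ) {x : ℝ} (hx : 0 < x) :
    HasDerivAt (besselKMoment ν k) (-besselKMoment ν (k + 1) x) x := by
  have key := hasDerivAt_integral_of_dominated_loc_of_deriv_le (μ := volume.restrict (Ioi 0))
    (F := fun y t => cosh t ^ k * (exp (-y * cosh t) * cosh (ν * t)))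
    (F' := fun y t => -(cosh t ^ (k + 1) * (exp (-y * cosh t) * cosh (ν * t))))
    (bound := fun t => cosh t ^ (k + 1) * (exp (-(x / 2) * cosh t) * cosh (ν * t)))
    (Metric.ball_mem_nhds x (half_pos hx)) (.of_forall fun y => by fun_prop)
    (integrableOn_cosh_pow_mul_exp_mul_cosh ν k hx) (by fun_prop) ?_
    (integrableOn_cosh_pow_mul_exp_mul_cosh ν (k + 1) (half_pos hx)) ?_
  · have := key.2
    rw [integral_neg] at this
    exact this
  · refine ae_of_all _ fun t y hy => ?_
    have hy : x / 2 ≤ y := by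
      rw [Metric.mem_ball, Real.dist_eq, abs_lt] at hy
      linarith
    rw [norm_neg, norm_of_nonneg (by positivity)]
    gcongr
  · refine ae_of_all _ fun t y _ => ?_
    have := (((hasDerivAt_id' y).neg.mul_const (cosh t)).exp.mul_const (cosh (ν * t))).const_mul
      (cosh t ^ k)
    refine this.congr_deriv ?_
    simp only [Pi.neg_apply]
    ring

theorem integrableOn_exp_mul_sinh_mul_cosh_add_sinh {x : ℝ} (hx : 0 < x) :
    IntegrableOn (fun t => exp (-x * cosh t) * (x * sinh t * cosh (ν * t) + ν * sinh (ν * t)))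
      (Ioi 0) := by
  refine ((integrableOn_cosh_pow_mul_exp_mul_cosh ν 1 hx).const_mul (x + |ν|)).mono' (by fun_prop)
    (ae_of_all _ fun t => ?_)
  have hsinh : |sinh (ν * t)| ≤ cosh t * cosh (ν * t) :=
    (abs_sinh_le_cosh _).trans (le_mul_of_one_le_left (cosh_pos _).le (one_le_cosh t))
  rw [norm_mul, norm_of_nonneg (exp_pos _).le, Real.norm_eq_abs, pow_one]
  calc exp (-x * cosh t) * |x * sinh t * cosh (ν * t) + ν * sinh (ν * t)|
      ≤ exp (-x * cosh t) * (x * |sinh t| * cosh (ν * t) + |ν| * |sinh (ν * t)|) := by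
        gcongr
        refine (abs_add_le _ _).trans_eq ?_
        rw [abs_mul, abs_mul, abs_mul, abs_of_pos hx, abs_of_pos (cosh_pos _)]
    _ ≤ exp (-x * cosh t) * (x * cosh t * cosh (ν * t) + |ν| * (cosh t * cosh (ν * t))) := by
        gcongr
        exact abs_sinh_le_cosh t
    _ = (x + |ν|) * (cosh t * (exp (-x * cosh t) * cosh (ν * t))) := by ring

theorem besselKMoment_ode {x : ℝ} (hx : 0 < x) :
    x ^ 2 * besselKMoment ν 2 x =
      x * besselKMoment ν 1 x + (x ^ 2 + ν ^ 2) * besselKMoment ν 0 x := by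
  set F : ℕ → ℝ → ℝ := fun k t => cosh t ^ k * (exp (-x * cosh t) * cosh (ν * t))
  have hF k : IntegrableOn (F k) (Ioi 0) := integrableOn_cosh_pow_mul_exp_mul_cosh ν k hx
  set G : ℝ → ℝ := fun t => exp (-x * cosh t) * (x * sinh t * cosh (ν * t) + ν * sinh (ν * t))
  have hG t : HasDerivAt G (x * F 1 t + (x ^ 2 + ν ^ 2) * F 0 t - x ^ 2 * F 2 t) t := by
    have hmul := (hasDerivAt_id t).const_mul ν
    have := ((hasDerivAt_cosh t).const_mul (-x)).exp.mul
      ((((hasDerivAt_sinh t).const_mul x).mul hmul.cosh).add (hmul.sinh.const_mul ν))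
    refine this.congr_deriv ?_
    simp only [F, id, Pi.add_apply, Pi.mul_apply, mul_one]
    linear_combination -x ^ 2 * exp (-x * cosh t) * cosh (ν * t) * sinh_sq t
  have hF₁₀ : IntegrableOn (fun t => x * F 1 t + (x ^ 2 + ν ^ 2) * F 0 t) (Ioi 0) :=
    ((hF 1).const_mul _).add ((hF 0).const_mul _)
  have hG'int : IntegrableOn (fun t => x * F 1 t + (x ^ 2 + ν ^ 2) * F 0 t - x ^ 2 * F 2 t)
      (Ioi 0) := hF₁₀.sub ((hF 2).const_mul _)
  have hGint : IntegrableOn G (Ioi 0) := integrableOn_exp_mul_sinh_mul_cosh_add_sinh ν hx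
  have h := integral_Ioi_of_hasDerivAt_of_tendsto' (fun t _ => hG t) hG'int
    (tendsto_zero_of_hasDerivAt_of_integrableOn_Ioi (fun t _ => hG t) hG'int hGint)
  rw [integral_sub hF₁₀ ((hF 2).const_mul _),
    integral_add ((hF 1).const_mul _) ((hF 0).const_mul _), integral_const_mul,
    integral_const_mul, integral_const_mul] at h
  simp only [G, sinh_zero, mul_zero, zero_sub] at h
  simp only [besselKMoment]
  linarith

theorem besselKMoment_le_exp_mul (k : ℕ) {x : ℝ} (hx : 1 ≤ x) :
    besselKMoment ν k x ≤ exp (1 - x) * besselKMoment ν k 1 := by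
  rw [besselKMoment, besselKMoment, ← integral_const_mul]
  refine setIntegral_mono_on (integrableOn_cosh_pow_mul_exp_mul_cosh ν k (by linarith))
    ((integrableOn_cosh_pow_mul_exp_mul_cosh ν k one_pos).const_mul _) measurableSet_Ioi
    fun t _ => ?_
  have : exp (-x * cosh t) ≤ exp (1 - x) * exp (-1 * cosh t) := by
    rw [← exp_add]
    exact exp_le_exp.2 (by nlinarith [one_le_cosh t])
  calc cosh t ^ k * (exp (-x * cosh t) * cosh (ν * t))
      ≤ cosh t ^ k * (exp (1 - x) * exp (-1 * cosh t) * cosh (ν * t)) := by gcongr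
    _ = _ := by ring

theorem tendsto_mul_besselKMoment_atTop (k : ℕ) :
    Tendsto (fun x => x * besselKMoment ν k x) atTop (𝓝 0) := by
  have hlim : Tendsto (fun x => exp 1 * besselKMoment ν k 1 * (x ^ 1 * exp (-x))) atTop (𝓝 0) := by
    simpa using (tendsto_pow_mul_exp_neg_atTop_nhds_zero 1).const_mul (exp 1 * besselKMoment ν k 1)
  refine squeeze_zero' ?_ ?_ hlim
  · filter_upwards [eventually_gt_atTop 0] with x hx
    exact mul_nonneg hx.le (besselKMoment_pos ν k hx).le
  · filter_upwards [eventually_ge_atTop 1] with x hx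
    calc x * besselKMoment ν k x ≤ x * (exp (1 - x) * besselKMoment ν k 1) := by
          gcongr
          exact besselKMoment_le_exp_mul ν k hx
      _ = _ := by rw [sub_eq_add_neg, exp_add]; ring

theorem besselEnergy_besselKMoment_pos {x : ℝ} (hx : 0 < x) :
    0 < besselEnergy ν (besselKMoment ν 0) (fun x => -besselKMoment ν 1 x) x := by
  set E := besselEnergy ν (besselKMoment ν 0) (fun x => -besselKMoment ν 1 x)
  have hK₀ {x : ℝ} (hx : 0 < x) := hasDerivAt_besselKMoment ν 0 hx
  have hK₁ {x : ℝ} (hx : 0 < x) :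
      HasDerivAt (fun x => -besselKMoment ν 1 x) (besselKMoment ν 2 x) x :=
    (hasDerivAt_besselKMoment ν 1 hx).neg.congr_deriv (neg_neg _)
  have hode {x : ℝ} (hx : 0 < x) : x ^ 2 * besselKMoment ν 2 x + x * -besselKMoment ν 1 x =
      (x ^ 2 + ν ^ 2) * besselKMoment ν 0 x := by
    linarith [besselKMoment_ode ν hx]
  have hanti : StrictAntiOn E (Ioi 0) :=
    strictAntiOn_besselEnergy (convex_Ioi 0) interior_subset
      (fun x hx =>
        (hasDerivAt_besselEnergy (hK₀ hx) (hK₁ hx) (hode hx)).continuousAt.continuousWithinAt)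
      (fun x hx => hK₀ (interior_subset hx)) (fun x hx => hK₁ (interior_subset hx))
      (fun x hx => hode (interior_subset hx))
      (fun x hx => (besselKMoment_pos ν 0 (interior_subset hx)).ne')
  have hlim : Tendsto E atTop (𝓝 0) := by
    have h₀ := tendsto_mul_besselKMoment_atTop ν 0
    have h₁ := tendsto_mul_besselKMoment_atTop ν 1
    have h₀' : Tendsto (besselKMoment ν 0) atTop (𝓝 0) := by
      refine (h₀.div_atTop tendsto_id).congr' ?_
      filter_upwards [eventually_gt_atTop 0] with x hx
      simp [hx.ne']
    have := (h₁.pow 2).sub ((h₀.pow 2).add ((h₀'.pow 2).const_mul (ν ^ 2)))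
    refine Tendsto.congr (fun x => ?_) (by simpa using this)
    simp only [E, besselEnergy]
    ring
  have hnonneg : 0 ≤ E (x + 1) :=
    le_of_tendsto hlim <| (eventually_gt_atTop (x + 1)).mono fun z hz =>
      (hanti (mem_Ioi.2 (by linarith)) (mem_Ioi.2 (by linarith)) hz).le
  exact hnonneg.trans_lt (hanti hx (mem_Ioi.2 (by linarith)) (lt_add_one x))

end BesselK

noncomputable def besselIMoment (m : ℤ) (k : ℕ) (x : ℝ) : ℝ :=
  ∫ θ in 0..π, cos θ ^ k * (exp (x * cos θ) * cos (m * θ))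

section BesselI

variable (m : ℤ)

theorem hasDerivAt_besselIMoment (k : ℕ) (x : ℝ) :
    HasDerivAt (besselIMoment m k) (besselIMoment m (k + 1) x) x := by
  refine (intervalIntegral.hasDerivAt_integral_of_dominated_loc_of_deriv_le
    (F' := fun y θ => cos θ ^ (k + 1) * (exp (y * cos θ) * cos (m * θ)))
    (bound := fun _ => exp (|x| + 1)) (Metric.ball_mem_nhds x one_pos)
    (.of_forall fun y => by fun_prop) (by apply Continuous.intervalIntegrable; fun_prop)
    (by fun_prop) ?_ intervalIntegrable_const ?_).2
  · refine ae_of_all _ fun θ _ y hy => ?_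
    have hy : |y| ≤ |x| + 1 := by
      have := abs_sub_abs_le_abs_sub y x
      rw [Metric.mem_ball, Real.dist_eq] at hy
      linarith
    have hexp : exp (y * cos θ) ≤ exp (|x| + 1) := by
      refine exp_le_exp.2 ((le_abs_self _).trans ?_)
      rw [abs_mul]
      nlinarith [abs_cos_le_one θ, abs_nonneg (cos θ), abs_nonneg y]
    rw [norm_mul, norm_mul, norm_pow, norm_of_nonneg (exp_pos _).le]
    calc ‖cos θ‖ ^ (k + 1) * (exp (y * cos θ) * ‖cos (m * θ)‖) ≤ 1 * (exp (|x| + 1) * 1) := by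
          gcongr
          · exact pow_le_one₀ (norm_nonneg _) (abs_cos_le_one θ)
          · exact abs_cos_le_one _
      _ = exp (|x| + 1) := by ring
  · refine ae_of_all _ fun θ _ y _ => ?_
    have := (((hasDerivAt_mul_const (cos θ)).exp).mul_const (cos (m * θ))).const_mul
      (cos θ ^ k) (x := y)
    exact this.congr_deriv (by ring)

theorem besselIMoment_ode (x : ℝ) :
    x ^ 2 * besselIMoment m 2 x + x * besselIMoment m 1 x =
      (x ^ 2 + m ^ 2) * besselIMoment m 0 x := by
  set F : ℕ → ℝ → ℝ := fun k θ => cos θ ^ k * (exp (x * cos θ) * cos (m * θ))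
  have hF k : IntervalIntegrable (F k) volume 0 π := by
    apply Continuous.intervalIntegrable; fun_prop
  set G : ℝ → ℝ := fun θ => exp (x * cos θ) * (x * sin θ * cos (m * θ) - m * sin (m * θ))
  have hG θ : HasDerivAt G (x ^ 2 * F 2 θ + x * F 1 θ - (x ^ 2 + m ^ 2) * F 0 θ) θ := by
    have hmul := (hasDerivAt_id θ).const_mul (m : ℝ)
    have := ((hasDerivAt_cos θ).const_mul x).exp.mul
      ((((hasDerivAt_sin θ).const_mul x).mul hmul.cos).sub (hmul.sin.const_mul (m : ℝ)))
    refine this.congr_deriv ?_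
    simp only [F, id, Pi.sub_apply, Pi.mul_apply, mul_one]
    linear_combination -x ^ 2 * exp (x * cos θ) * cos (m * θ) * sin_sq_add_cos_sq θ
  have h := intervalIntegral.integral_eq_sub_of_hasDerivAt (fun θ _ => hG θ)
    ((((hF 2).const_mul _).add ((hF 1).const_mul _)).sub ((hF 0).const_mul _))
  rw [intervalIntegral.integral_sub (((hF 2).const_mul _).add ((hF 1).const_mul _))
      ((hF 0).const_mul _), intervalIntegral.integral_add ((hF 2).const_mul _) ((hF 1).const_mul _),
    intervalIntegral.integral_const_mul, intervalIntegral.integral_const_mul,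
    intervalIntegral.integral_const_mul] at h
  simp only [G, sin_zero, sin_pi, sin_int_mul_pi, mul_zero, zero_mul, sub_zero] at h
  simp only [besselIMoment]
  linarith

noncomputable def cosMoment (n : ℕ) (m : ℤ) : ℝ :=
  ∫ θ in 0..π, cos θ ^ n * cos (m * θ)

theorem cosMoment_zero_zero : cosMoment 0 0 = π := by
  simp [cosMoment]

theorem mul_cosMoment_zero : (m : ℝ) * cosMoment 0 m = 0 := by
  have h := intervalIntegral.integral_eq_sub_of_hasDerivAt (a := 0) (b := π)
    (fun θ _ => ((hasDerivAt_id θ).const_mul (m : ℝ)).sin)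
    (by apply Continuous.intervalIntegrable; fun_prop)
  simp only [id, mul_one, mul_zero, sin_zero, sub_zero, sin_int_mul_pi] at h
  rw [cosMoment, ← intervalIntegral.integral_const_mul]
  simpa only [pow_zero, one_mul, mul_comm] using h

theorem cosMoment_neg (n : ℕ) : cosMoment n (-m) = cosMoment n m := by
  simp [cosMoment, neg_mul, cos_neg]

theorem cosMoment_succ (n : ℕ) :
    cosMoment (n + 1) m = (cosMoment n (m - 1) + cosMoment n (m + 1)) / 2 := by
  rw [cosMoment, cosMoment, cosMoment, ← intervalIntegral.integral_add
      (by apply Continuous.intervalIntegrable; fun_prop)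
      (by apply Continuous.intervalIntegrable; fun_prop), ← intervalIntegral.integral_div]
  refine intervalIntegral.integral_congr fun θ _ => ?_
  push_cast
  rw [sub_mul, add_mul, one_mul, cos_sub, cos_add]
  ring

theorem cosMoment_nonneg (n : ℕ) (m : ℤ) : 0 ≤ cosMoment n m := by
  induction n generalizing m with
  | zero =>
    rcases eq_or_ne m 0 with rfl | hm
    · exact cosMoment_zero_zero ▸ pi_pos.le
    · have := mul_cosMoment_zero m
      rw [mul_eq_zero, or_iff_right (Int.cast_ne_zero.2 hm)] at this
      exact this.ge
  | succ n ih =>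
    rw [cosMoment_succ]
    linarith [ih (m - 1), ih (m + 1)]

theorem cosMoment_natCast_self_pos (n : ℕ) : 0 < cosMoment n n := by
  induction n with
  | zero => exact cosMoment_zero_zero ▸ pi_pos
  | succ n ih =>
    rw [cosMoment_succ, Nat.cast_succ, add_sub_cancel_right]
    linarith [cosMoment_nonneg n (n + 1 + 1)]

theorem cosMoment_natAbs_pos : 0 < cosMoment m.natAbs m := by
  obtain ⟨n, rfl | rfl⟩ := Int.eq_nat_or_neg m
  · exact cosMoment_natCast_self_pos n
  · rw [Int.natAbs_neg, Int.natAbs_natCast, cosMoment_neg]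
    exact cosMoment_natCast_self_pos n

theorem hasSum_cosMoment (x : ℝ) :
    HasSum (fun n : ℕ => x ^ n / n ! * cosMoment n m) (besselIMoment m 0 x) := by
  have h := intervalIntegral.hasSum_integral_of_dominated_convergence
    (μ := volume) (a := 0) (b := π)
    (F := fun (n : ℕ) θ => x ^ n / n ! * (cos θ ^ n * cos (m * θ)))
    (f := fun θ => cos θ ^ 0 * (exp (x * cos θ) * cos (m * θ)))
    (fun n _ => |x| ^ n / n !) (fun n => by fun_prop) (fun n => ae_of_all _ fun θ _ => ?_)
    (ae_of_all _ fun _ _ => summable_pow_div_factorial |x|) intervalIntegrable_const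
    (ae_of_all _ fun θ _ => ?_)
  · simp only [intervalIntegral.integral_const_mul] at h
    exact h
  · rw [norm_mul, norm_mul, norm_div, norm_pow, norm_pow, Real.norm_natCast]
    calc ‖x‖ ^ n / n ! * (‖cos θ‖ ^ n * ‖cos (m * θ)‖) ≤ ‖x‖ ^ n / n ! * (1 ^ n * 1) := by
          gcongr
          · exact abs_cos_le_one θ
          · exact abs_cos_le_one _
      _ = |x| ^ n / n ! := by simp
  · have := (NormedSpace.expSeries_div_hasSum_exp (x * cos θ)).mul_right (cos (m * θ))
    rw [← exp_eq_exp_ℝ] at this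
    have hterm : (fun n : ℕ => x ^ n / n ! * (cos θ ^ n * cos (m * θ))) =
        fun n => (x * cos θ) ^ n / n ! * cos (m * θ) := by
      funext n
      ring
    rw [pow_zero, one_mul, hterm]
    exact this

theorem besselIMoment_zero_pos {x : ℝ} (hx : 0 < x) : 0 < besselIMoment m 0 x :=
  hasSum_lt (f := 0) (i := m.natAbs) (fun n => by have := cosMoment_nonneg n m; positivity)
    (by have := cosMoment_natAbs_pos m; positivity) hasSum_zero (hasSum_cosMoment m x)

theorem besselEnergy_besselIMoment_neg {x : ℝ} (hx : 0 < x) :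
    besselEnergy m (besselIMoment m 0) (besselIMoment m 1) x < 0 := by
  have hE (x : ℝ) := hasDerivAt_besselEnergy (hasDerivAt_besselIMoment m 0 x)
    (hasDerivAt_besselIMoment m 1 x) (besselIMoment_ode m x)
  have hanti := strictAntiOn_besselEnergy (convex_Ici 0) (by rw [interior_Ici])
    (fun x _ => (hE x).continuousAt.continuousWithinAt)
    (fun x _ => hasDerivAt_besselIMoment m 0 x) (fun x _ => hasDerivAt_besselIMoment m 1 x)
    (fun x _ => besselIMoment_ode m x)
    (fun x hx => (besselIMoment_zero_pos m (by rwa [interior_Ici] at hx)).ne')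
  have hzero : besselEnergy m (besselIMoment m 0) (besselIMoment m 1) 0 = 0 := by
    have h : besselIMoment m 0 0 = cosMoment 0 m := by simp [besselIMoment, cosMoment]
    simp only [besselEnergy, h]
    linear_combination -(m * cosMoment 0 m) * mul_cosMoment_zero m
  exact hzero ▸ hanti self_mem_Ici hx.le hx

end BesselI

theorem mul_add_mul_neg_of_sq_bounds {ν x a a' b b' : ℝ} (hx : 0 < x) (ha : 0 < a)
    (hb' : b' ≤ 0) (hA : x ^ 2 * a' ^ 2 ≤ (x ^ 2 + ν ^ 2) * a ^ 2)
    (hB : (x ^ 2 + ν ^ 2) * b ^ 2 < x ^ 2 * b' ^ 2) : a' * b + a * b' < 0 := by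
  have hsq : (x * (a' * b)) ^ 2 < (x * (a * -b')) ^ 2 :=
    calc (x * (a' * b)) ^ 2 = x ^ 2 * a' ^ 2 * b ^ 2 := by ring
      _ ≤ (x ^ 2 + ν ^ 2) * a ^ 2 * b ^ 2 := by gcongr
      _ = a ^ 2 * ((x ^ 2 + ν ^ 2) * b ^ 2) := by ring
      _ < a ^ 2 * (x ^ 2 * b' ^ 2) := by gcongr
      _ = (x * (a * -b')) ^ 2 := by ring
  have := lt_of_mul_lt_mul_left (lt_of_pow_lt_pow_left₀ 2
    (mul_nonneg hx.le (mul_nonneg ha.le (neg_nonneg.2 hb'))) hsq) hx.le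
  linarith

/-- `x ↦ I_m(x) K_m(x)` is strictly decreasing on `(0, ∞)`. -/
theorem besselI_mul_besselK_strictAntiOn (m : ℤ) :
    StrictAntiOn (fun x => besselI m x * besselK m x) (Set.Ioi (0:ℝ)) := by
  have hI : besselI m = fun x => π⁻¹ * besselIMoment m 0 x := by
    funext x
    simp [besselI, besselIMoment]
  have hK : besselK m = besselKMoment m 0 := by
    funext x
    simp [besselK, besselKMoment]
  have hderiv {x : ℝ} (hx : 0 < x) := ((hasDerivAt_besselIMoment m 0 x).const_mul π⁻¹).mul
    (hasDerivAt_besselKMoment m 0 hx)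
  simp only [hI, hK]
  refine strictAntiOn_of_hasDerivWithinAt_neg (convex_Ioi 0)
    (fun x hx => (hderiv hx).continuousAt.continuousWithinAt)
    (fun x hx => (hderiv (interior_subset hx : x ∈ Set.Ioi 0)).hasDerivWithinAt) fun x hx => ?_
  rw [interior_Ioi] at hx
  have hneg := mul_add_mul_neg_of_sq_bounds hx (besselIMoment_zero_pos m hx)
    (neg_nonpos.2 (besselKMoment_pos m 1 hx).le)
    (sub_nonpos.1 (besselEnergy_besselIMoment_neg m hx).le)
    (sub_pos.1 (besselEnergy_besselKMoment_pos m hx))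
  linarith [mul_neg_of_pos_of_neg (inv_pos.2 pi_pos) hneg]
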